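/- Let S₁ ≤ S₂ ≤ … ≤ Sₙ be positive reals, λ, ε > 0, h = λε²/(1+λ). For the minimizer of (1+λ)Σ_i (q_i S_i − 1)² + λε² (max_i q_i)² over q ∈ ℝⁿ with q_i ≥ 0, the optimal q satisfies: there exists m such that q_i = q_m = (Σ_{j=1}^m S_j)/(Σ_{j=1}^m S_j² + h) for i ≤ m and q_i = 1/S_i for i > m, and the maximum entry of q is q_m. -/

import Mathlib

/-- the minimizer of `(1+λ)Σᵢ (qᵢ Sᵢ − 1)² + λε² (maxᵢ qᵢ)²` over `q ≥ 0`
has the form: there exists `m` such that `qᵢ = q_m = (Σ_{j≤m} Sⱼ)/(Σ_{j≤m} Sⱼ² + h)`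
for `i ≤ m`, and `qᵢ = 1/Sᵢ` for `i > m`; `q_m` is the maximum entry of `q`. -/
theorem robust_diagonal_minimizer_structure {n : ℕ} (hn : 0 < n)
    (S : Fin n → ℝ) (hS : ∀ i, 0 < S i) (hSmono : ∀ i j : Fin n, i ≤ j → S i ≤ S j)
    (lam ε h : ℝ) (hlam : 0 < lam) (hε : 0 < ε) (hh : h = lam * ε^2 / (1 + lam))
    (qstar : Fin n → ℝ) (hq0 : ∀ i, 0 ≤ qstar i)
    (hmin : ∀ q : Fin n → ℝ, (∀ i, 0 ≤ q i) →
      (1 + lam) * (∑ i, (qstar i * S i - 1)^2) + lam * ε^2 * (⨆ i, qstar i)^2 ≤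
      (1 + lam) * (∑ i, (q i * S i - 1)^2) + lam * ε^2 * (⨆ i, q i)^2) :
    ∃ m : ℕ, m ≤ n ∧
      (∀ i : Fin n, (i : ℕ) < m →
        qstar i = (∑ j ∈ Finset.univ.filter (fun j : Fin n => (j : ℕ) < m), S j) /
          ((∑ j ∈ Finset.univ.filter (fun j : Fin n => (j : ℕ) < m), (S j)^2) + h)) ∧
      (∀ i : Fin n, m ≤ (i : ℕ) → qstar i = 1 / S i) ∧
      (∀ i : Fin n,
        qstar i ≤ (∑ j ∈ Finset.univ.filter (fun j : Fin n => (j : ℕ) < m), S j) /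
          ((∑ j ∈ Finset.univ.filter (fun j : Fin n => (j : ℕ) < m), (S j)^2) + h)) := by
  classical
  haveI : Nonempty (Fin n) := ⟨⟨0, hn⟩⟩
  have hlam1 : (0:ℝ) < 1 + lam := by linarith
  have hle2 : (0:ℝ) < lam * ε^2 := by positivity
  set t := ⨆ i, qstar i with ht_def
  have hbdd : BddAbove (Set.range qstar) := Set.Finite.bddAbove (Set.finite_range _)
  have ht_le : ∀ i, qstar i ≤ t := fun i => le_ciSup hbdd i
  obtain ⟨i₀, hi₀⟩ := Finite.exists_max qstar
  have ht_eq : t = qstar i₀ := le_antisymm (ciSup_le hi₀) (ht_le i₀)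
  have ht0 : 0 ≤ t := (hq0 i₀).trans (ht_le i₀)
  -- Step 1: every coordinate equals min (1/S i) t
  have key : ∀ i, qstar i = min (1 / S i) t := by
    intro i
    by_contra hne
    set v := min (1 / S i) t with hv
    have hSi := hS i
    have hv0 : 0 ≤ v := le_min (by positivity) ht0
    have hvt : v ≤ t := min_le_right _ _
    set q' := Function.update qstar i v with hq'
    have hq'0 : ∀ j, 0 ≤ q' j := by
      intro j
      rcases eq_or_ne j i with rfl | hj
      · simpa [hq'] using hv0
      · simpa [hq', Function.update_of_ne hj] using hq0 j
    have hstrict : (v * S i - 1)^2 < (qstar i * S i - 1)^2 := by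
      rcases le_or_gt t (1 / S i) with hc | hc
      · have hveq : v = t := min_eq_right hc
        have hq_lt : qstar i < t :=
          lt_of_le_of_ne (ht_le i) (by rw [hveq] at hne; exact hne)
        have h1 : t * S i ≤ 1 := by
          rw [le_div_iff₀ hSi] at hc; linarith
        have h3 : 0 ≤ qstar i * S i := mul_nonneg (hq0 i) hSi.le
        have h2 : qstar i * S i < t * S i := by nlinarith
        rw [hveq]
        nlinarith [mul_pos (sub_pos.mpr h2)
          (show (0:ℝ) < 2 - qstar i * S i - t * S i by linarith)]
      · have hveq : v = 1 / S i := min_eq_left hc.le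
        have h1 : v * S i = 1 := by rw [hveq]; field_simp
        have h2 : qstar i * S i ≠ 1 := by
          intro hcon
          apply hne
          rw [hveq, eq_div_iff hSi.ne']
          exact hcon
        rw [h1]
        have h3 := sub_ne_zero.mpr h2
        simpa using pow_pos (abs_pos.mpr h3) 2 |>.trans_le (by rw [sq_abs])
    have hsum : ∑ j, (q' j * S j - 1)^2 < ∑ j, (qstar j * S j - 1)^2 := by
      apply Finset.sum_lt_sum
      · intro j _
        rcases eq_or_ne j i with rfl | hj
        · simpa [hq'] using hstrict.le
        · simp [hq', Function.update_of_ne hj]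
      · exact ⟨i, Finset.mem_univ i, by simpa [hq'] using hstrict⟩
    have hbdd' : BddAbove (Set.range q') := Set.Finite.bddAbove (Set.finite_range _)
    have hsup_le : (⨆ j, q' j) ≤ t := by
      apply ciSup_le
      intro j
      rcases eq_or_ne j i with rfl | hj
      · simpa [hq'] using hvt
      · simpa [hq', Function.update_of_ne hj] using ht_le j
    have hsup0 : 0 ≤ ⨆ j, q' j := (hq'0 i₀).trans (le_ciSup hbdd' i₀)
    have hsq : (⨆ j, q' j)^2 ≤ t^2 := pow_le_pow_left₀ hsup0 hsup_le 2
    have hM := hmin q' hq'0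
    nlinarith [mul_lt_mul_of_pos_left hsum hlam1,
      mul_le_mul_of_nonneg_left hsq hle2.le]
  -- the initial segment
  set M := Finset.univ.filter (fun i : Fin n => S i * t ≤ 1) with hM
  set m := M.card with hm
  have hmemM : ∀ i : Fin n, i ∈ M ↔ S i * t ≤ 1 := by
    intro i; simp [hM]
  have hdown : ∀ i j : Fin n, i ≤ j → j ∈ M → i ∈ M := by
    intro i j hij hjM
    rw [hmemM] at hjM ⊢
    exact le_trans (mul_le_mul_of_nonneg_right (hSmono i j hij) ht0) hjM
  have hiff : ∀ i : Fin n, i ∈ M ↔ (i : ℕ) < m := by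
    intro i
    constructor
    · intro hi
      have hsub : Finset.Iic i ⊆ M := fun j hj => hdown j i (Finset.mem_Iic.mp hj) hi
      have hcard := Finset.card_le_card hsub
      rw [Fin.card_Iic] at hcard
      omega
    · intro hi
      by_contra hcon
      have hsub : M ⊆ Finset.Iio i := by
        intro j hj
        rw [Finset.mem_Iio]
        by_contra hji
        exact hcon (hdown i j (le_of_not_gt hji) hj)
      have hcard := Finset.card_le_card hsub
      rw [Fin.card_Iio] at hcard
      omega
  have hfilter : Finset.univ.filter (fun j : Fin n => (j : ℕ) < m) = M := by
    ext j
    simp only [Finset.mem_filter, Finset.mem_univ, true_and]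
    exact (hiff j).symm
  set A := ∑ j ∈ M, S j with hA_def
  set B := ∑ j ∈ M, (S j)^2 with hB_def
  -- the first index is in M
  have hz : (⟨0, hn⟩ : Fin n) ∈ M := by
    by_contra hzc
    rw [hmemM] at hzc
    push_neg at hzc
    have hS0 := hS ⟨0, hn⟩
    have h1i : 1 < S i₀ * t := by
      have hle : (⟨0, hn⟩ : Fin n) ≤ i₀ := by simp [Fin.le_def]
      have := mul_le_mul_of_nonneg_right (hSmono _ i₀ hle) ht0
      linarith
    have hlt : 1 / S i₀ < t := by
      rw [div_lt_iff₀ (hS i₀)]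
      linarith [mul_comm (S i₀) t]
    have hq := key i₀
    rw [min_eq_left hlt.le] at hq
    have : t = 1 / S i₀ := ht_eq.trans hq
    linarith
  have hMne : M.Nonempty := ⟨_, hz⟩
  have hm1 : 0 < m := Finset.card_pos.mpr hMne
  have hApos : 0 < A := Finset.sum_pos (fun j _ => hS j) hMne
  have hBpos : 0 < B := Finset.sum_pos (fun j _ => pow_pos (hS j) 2) hMne
  have hhpos : 0 < h := by rw [hh]; exact div_pos (by positivity) hlam1
  have hBh : 0 < B + h := by linarith
  have hq_in : ∀ i ∈ M, qstar i = t := by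
    intro i hi
    rw [hmemM] at hi
    have : t ≤ 1 / S i := by
      rw [le_div_iff₀ (hS i)]
      linarith [mul_comm (S i) t]
    rw [key i, min_eq_right this]
  have hq_out : ∀ i ∉ M, qstar i = 1 / S i := by
    intro i hi
    rw [hmemM] at hi
    push_neg at hi
    have : 1 / S i ≤ t := by
      rw [div_le_iff₀ (hS i)]
      linarith [mul_comm (S i) t]
    rw [key i, min_eq_left this]
  have hout_lt : ∀ i ∉ M, 1 / S i < t := by
    intro i hi
    rw [hmemM] at hi
    push_neg at hi
    rw [div_lt_iff₀ (hS i)]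
    linarith [mul_comm (S i) t]
  -- expansion of the quadratic
  have hexpand : ∀ s : ℝ, ∑ i ∈ M, (s * S i - 1)^2 = B * s^2 - 2 * A * s + m := by
    intro s
    have h1 : ∀ i ∈ M, (s * S i - 1)^2 = (S i)^2 * s^2 - S i * (2*s) + 1 :=
      fun i _ => by ring
    rw [Finset.sum_congr rfl h1]
    rw [Finset.sum_add_distrib, Finset.sum_sub_distrib, ← Finset.sum_mul,
      ← Finset.sum_mul, Finset.sum_const, nsmul_eq_mul]
    rw [← hA_def, ← hB_def, ← hm]
    ring
  have hsum_split : ∀ q : Fin n → ℝ, (∀ i ∉ M, q i = 1 / S i) →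
      ∑ i, (q i * S i - 1)^2 = ∑ i ∈ M, (q i * S i - 1)^2 := by
    intro q hq
    refine (Finset.sum_subset (Finset.subset_univ M) ?_).symm
    intro i _ hi
    rw [hq i hi]
    have := (hS i).ne'
    field_simp
    norm_num
  have hΦt : (1+lam) * (∑ i, (qstar i * S i - 1)^2) + lam*ε^2*t^2
      = (1+lam) * (B*t^2 - 2*A*t + m) + lam*ε^2*t^2 := by
    rw [hsum_split qstar hq_out,
      Finset.sum_congr rfl (fun i hi => by rw [hq_in i hi]), hexpand]
  -- main comparison
  have hmain : ∀ s : ℝ, 0 ≤ s → (∀ i ∉ M, 1 / S i ≤ s) →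
      (1+lam) * (B*t^2 - 2*A*t + m) + lam*ε^2*t^2 ≤
      (1+lam) * (B*s^2 - 2*A*s + m) + lam*ε^2*s^2 := by
    intro s hs hsge
    set q : Fin n → ℝ := fun i => if i ∈ M then s else 1 / S i with hqdef
    have hq0' : ∀ i, 0 ≤ q i := by
      intro i
      by_cases hi : i ∈ M
      · simp [hqdef, hi, hs]
      · simp only [hqdef, if_neg hi]
        have := hS i
        positivity
    have hqout : ∀ i ∉ M, q i = 1 / S i := fun i hi => by simp [hqdef, if_neg hi]
    have hsup : (⨆ i, q i) = s := by
      apply le_antisymm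
      · apply ciSup_le
        intro i
        by_cases hi : i ∈ M
        · simp [hqdef, hi]
        · simp only [hqdef, if_neg hi]
          exact hsge i hi
      · have hle := le_ciSup (Set.Finite.bddAbove (Set.finite_range q)) (⟨0, hn⟩ : Fin n)
        simpa [hqdef, hz] using hle
    have hM2 := hmin q hq0'
    have hsum_eq : ∑ i ∈ M, (q i * S i - 1)^2 = ∑ i ∈ M, (s * S i - 1)^2 :=
      Finset.sum_congr rfl (fun i hi => by simp [hqdef, hi])
    rw [hsup, hsum_split q hqout, hsum_eq, hexpand] at hM2
    calc (1+lam) * (B*t^2 - 2*A*t + ↑m) + lam*ε^2*t^2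
        = (1+lam) * (∑ i, (qstar i * S i - 1)^2) + lam*ε^2*t^2 := hΦt.symm
      _ ≤ (1+lam) * (B*s^2 - 2*A*s + ↑m) + lam*ε^2*s^2 := hM2
  -- reduce to quadratic inequality with vertex tstar
  set tstar := A / (B + h) with htstar
  have hts_pos : 0 < tstar := div_pos hApos hBh
  have hkey2 : ∀ s : ℝ, 0 ≤ s → (∀ i ∉ M, 1 / S i ≤ s) →
      (t - tstar)^2 ≤ (s - tstar)^2 := by
    intro s h1 h2
    have h3 := hmain s h1 h2
    have hheq : (1+lam) * h = lam * ε^2 := by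
      rw [hh]; field_simp
    have htseq : (B + h) * tstar = A := by
      rw [htstar]; field_simp
    have hC : (0:ℝ) < (1+lam)*(B+h) := by positivity
    have e : ∀ x : ℝ, (1+lam)*(B+h)*(x - tstar)^2
        = ((1+lam)*(B*x^2 - 2*A*x + ↑m) + lam*ε^2*x^2) - (1+lam)*↑m
          + (1+lam)*(B+h)*tstar^2 := by
      intro x
      linear_combination x^2 * hheq - 2*x*(1+lam)*htseq
    have h4 : (1+lam)*(B+h)*(t - tstar)^2 ≤ (1+lam)*(B+h)*(s - tstar)^2 := by
      rw [e t, e s]; linarith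
    exact le_of_mul_le_mul_left (by linarith) hC
  -- conclude t = tstar
  have heq : t = tstar := by
    rcases le_or_gt n m with hmn | hmn
    · -- every index in M
      have hall : ∀ i : Fin n, i ∈ M := fun i => (hiff i).mpr (lt_of_lt_of_le i.isLt hmn)
      have h5 := hkey2 tstar hts_pos.le (fun i hi => absurd (hall i) hi)
      have h6 : (t - tstar)^2 = 0 := le_antisymm (by simpa using h5) (sq_nonneg _)
      have h7 : t - tstar = 0 := by
        have := sq_eq_zero_iff.mp h6
        exact this
      linarith
    · set im : Fin n := ⟨m, hmn⟩ with him
      have himM : im ∉ M := by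
        rw [hiff]
        simp [him]
      have hc_lt : 1 / S im < t := hout_lt im himM
      have hc_pos : 0 < 1 / S im := by have := hS im; positivity
      have hbound : ∀ i ∉ M, 1 / S i ≤ 1 / S im := by
        intro i hi
        have : m ≤ (i : ℕ) := by
          by_contra hcon
          exact hi ((hiff i).mpr (lt_of_not_ge hcon))
        have hle : im ≤ i := by simp [Fin.le_def, him, this]
        exact one_div_le_one_div_of_le (hS im) (hSmono im i hle)
      rcases le_or_gt (1 / S im) tstar with hcase | hcase
      · have h5 := hkey2 tstar hts_pos.le (fun i hi => (hbound i hi).trans hcase)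
        have h6 : (t - tstar)^2 = 0 := le_antisymm (by simpa using h5) (sq_nonneg _)
        have h7 : t - tstar = 0 := sq_eq_zero_iff.mp h6
        linarith
      · exfalso
        have h5 := hkey2 (1 / S im) hc_pos.le hbound
        nlinarith [h5]
  -- assemble the answer
  refine ⟨m, ?_, ?_, ?_, ?_⟩
  · have := Finset.card_le_univ M
    simpa [hm] using this
  · intro i hi
    rw [hfilter, ← hA_def, ← hB_def, hq_in i ((hiff i).mpr hi), heq, htstar]
  · intro i hi
    refine hq_out i ?_
    intro hc
    rw [hiff i] at hc
    omega
  · intro i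
    rw [hfilter, ← hA_def, ← hB_def]
    calc qstar i ≤ t := ht_le i
      _ = A / (B + h) := by rw [heq, htstar]
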